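/- arXiv:1404.7289 — 2 statements merged into one kernel-verified Lean document; each statement's English description precedes it below -/
import Mathlib

section
/- Let r ≥ 2 be an even integer and g ≥ 2 an integer. Then the function β ↦ ((r/2)^{g}/r) · Σ_{k ∈ H_r} (⦃rβ⦄/⦃β+k⦄)^{2g−2} (a function of β ∈ ℂ) tends to r^{3g−3}/2^{g−1} as β tends to 1 within ℂ∖{1}. (This is the evaluation of the paper's Verlinde formula giving dim 𝕍(Σ) = r^{3g−3}/2^{g−1} for a genus-g surface when r is even and β goes to an odd integer.) -/
/-- `q^x = exp(π i x / r)`. -/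
noncomputable def qc (r : ℕ) (x : ℂ) : ℂ := Complex.exp (Real.pi * Complex.I * x / r)

/-- `⦃x⦄ = q^x - q^{-x}`. -/
noncomputable def br (r : ℕ) (x : ℂ) : ℂ := qc r x - qc r (-x)

/-- `H_r = {1-r, 3-r, …, r-1}`, the `r` integers `2j - (r-1)` for `j = 0, …, r-1`. -/
def Hr (r : ℕ) : Finset ℤ := (Finset.range r).image (fun j : ℕ => 2 * (j : ℤ) - ((r : ℤ) - 1))

/-! Since `⦃x⦄ = 2i·sin(πx/r)`, the numerator `⦃rβ⦄ = 2i·sin(πβ)` has a simple zero at `β = 1`,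
while `⦃β + k⦄` vanishes at `β = 1` exactly when `r ∣ 1 + k`, i.e. for `k = -1` and `k = r - 1`,
both in `H_r` because `r` is even. By comparing derivatives these two terms tend to
`(±r)^(2g-2) = r^(2g-2)`, and every other term tends to `0`, so the limit is
`((r/2)^g / r) · 2r^(2g-2) = r^(3g-3) / 2^(g-1)`. -/

open Complex Filter Finset Topology
open scoped Real

theorem tendsto_div_nhdsNE_of_hasDerivAt {𝕜 : Type*} [NontriviallyNormedField 𝕜]
    {f g : 𝕜 → 𝕜} {a f' g' : 𝕜} (hf : HasDerivAt f f' a) (hg : HasDerivAt g g' a)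
    (hfa : f a = 0) (hga : g a = 0) (hg' : g' ≠ 0) :
    Tendsto (fun x => f x / g x) (𝓝[≠] a) (𝓝 (f' / g')) := by
  refine ((hasDerivAt_iff_tendsto_slope.1 hf).div (hasDerivAt_iff_tendsto_slope.1 hg) hg').congr' ?_
  filter_upwards [self_mem_nhdsWithin] with x hx
  rw [Pi.div_apply, slope_def_field, slope_def_field, hfa, hga, sub_zero, sub_zero,
    div_div_div_cancel_right₀ (sub_ne_zero.2 hx)]

theorem br_eq_two_mul_I_mul_sin (r : ℕ) (x : ℂ) : br r x = 2 * I * sin (π * x / r) := by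
  rw [mul_right_comm, two_sin, br, qc, qc]
  ring_nf
  rw [I_sq]
  ring_nf

theorem br_natCast_mul {r : ℕ} (hr : r ≠ 0) (β : ℂ) : br r (r * β) = 2 * I * sin (π * β) := by
  rw [br_eq_two_mul_I_mul_sin]
  field_simp

theorem br_natCast (r : ℕ) : br r r = 0 := by
  rcases eq_or_ne r 0 with rfl | hr
  · simp [br_eq_two_mul_I_mul_sin]
  · simpa using br_natCast_mul hr 1

theorem br_eq_zero_iff {r : ℕ} (hr : r ≠ 0) {x : ℂ} : br r x = 0 ↔ ∃ n : ℤ, x = n * r := by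
  have hr' : (r : ℂ) ≠ 0 := Nat.cast_ne_zero.2 hr
  simp only [br_eq_two_mul_I_mul_sin, mul_eq_zero, two_ne_zero, I_ne_zero, or_self, false_or,
    sin_eq_zero_iff]
  refine exists_congr fun n => ?_
  rw [div_eq_iff hr']
  constructor <;> intro h
  · exact mul_left_cancel₀ (ofReal_ne_zero.2 Real.pi_ne_zero) (by linear_combination h)
  · linear_combination π * h

@[fun_prop]
theorem continuous_br (r : ℕ) : Continuous (br r) := by
  unfold br qc
  fun_prop

theorem hasDerivAt_br_add (r : ℕ) (k a : ℂ) :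
    HasDerivAt (fun β => br r (β + k)) (2 * I * cos (π * (a + k) / r) * (π / r)) a := by
  simp only [br_eq_two_mul_I_mul_sin]
  refine ((((hasDerivAt_id' a).add_const k).const_mul (π : ℂ)).div_const (r : ℂ)).csin.const_mul
    (2 * I) |>.congr_deriv ?_
  ring

theorem hasDerivAt_br_natCast_mul {r : ℕ} (hr : r ≠ 0) (a : ℂ) :
    HasDerivAt (fun β => br r (r * β)) (2 * I * cos (π * a) * π) a := by
  simp only [br_natCast_mul hr]
  refine ((hasDerivAt_id' a).const_mul (π : ℂ)).csin.const_mul (2 * I) |>.congr_deriv ?_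
  ring

theorem tendsto_br_ratio_sq_of_br_eq_zero {r : ℕ} (hr : r ≠ 0) {k : ℂ} (hk : br r (1 + k) = 0) :
    Tendsto (fun β => (br r (r * β) / br r (β + k)) ^ 2) (𝓝[≠] 1) (𝓝 ((r : ℂ) ^ 2)) := by
  have hr' : (r : ℂ) ≠ 0 := Nat.cast_ne_zero.2 hr
  have hπ : (π : ℂ) ≠ 0 := ofReal_ne_zero.2 Real.pi_ne_zero
  have hcos : cos (π * (1 + k) / r) ^ 2 = 1 := by
    have hsin : sin (π * (1 + k) / r) = 0 := by
      simpa [br_eq_two_mul_I_mul_sin, I_ne_zero] using hk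
    linear_combination cos_sq_add_sin_sq (π * (1 + k) / r) - sin (π * (1 + k) / r) * hsin
  have hcos0 : cos (π * (1 + k) / r) ≠ 0 := fun h => by simp [h] at hcos
  have hlim := tendsto_div_nhdsNE_of_hasDerivAt (hasDerivAt_br_natCast_mul hr 1)
    (hasDerivAt_br_add r k 1) (by simpa using br_natCast r) hk
    (by simp [I_ne_zero, hcos0, hπ, hr'])
  -- the limit of the ratio itself is `-r / cos (π (1 + k) / r) = ∓r`
  convert hlim.pow 2 using 2
  rw [mul_one, cos_pi]
  field_simp
  linear_combination hcos

theorem tendsto_br_ratio_of_br_ne_zero (r : ℕ) {k : ℂ} (hk : br r (1 + k) ≠ 0) :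
    Tendsto (fun β => br r (r * β) / br r (β + k)) (𝓝 1) (𝓝 0) := by
  have hnum : Tendsto (fun β => br r (r * β)) (𝓝 1) (𝓝 0) :=
    (by fun_prop : Continuous fun β : ℂ => br r (r * β)).tendsto' 1 0 (by simpa using br_natCast r)
  have hden : Tendsto (fun β => br r (β + k)) (𝓝 1) (𝓝 (br r (1 + k))) :=
    (by fun_prop : Continuous fun β : ℂ => br r (β + k)).tendsto 1
  have h := hnum.div hden hk
  rw [zero_div] at h
  exact h

theorem filter_Hr_br_one_add_eq_zero {r : ℕ} (hr : r ≠ 0) (heven : Even r) :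
    (Hr r).filter (fun k : ℤ => br r (1 + k) = 0) = {-1, (r : ℤ) - 1} := by
  ext k
  simp only [mem_filter, Hr, mem_image, mem_range, mem_insert, mem_singleton, br_eq_zero_iff hr]
  constructor
  · rintro ⟨⟨j, hj, rfl⟩, n, hn⟩
    have hn' : 1 + (2 * (j : ℤ) - ((r : ℤ) - 1)) = n * r := by exact_mod_cast hn
    have hn0 : 0 ≤ n := by nlinarith
    have hn1 : n ≤ 1 := by nlinarith
    interval_cases n <;> omega
  · obtain ⟨t, rfl⟩ := heven
    rintro (rfl | rfl)
    · exact ⟨⟨t - 1, by omega, by omega⟩, 0, by simp⟩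
    · exact ⟨⟨t + t - 1, by omega, by omega⟩, 1, by push_cast; ring⟩

theorem tendsto_sum_Hr_br_ratio_sq_pow {r : ℕ} (hr : r ≠ 0) (heven : Even r) {m : ℕ}
    (hm : m ≠ 0) :
    Tendsto (fun β => ∑ k ∈ Hr r, ((br r (r * β) / br r (β + k)) ^ 2) ^ m) (𝓝[≠] 1)
      (𝓝 (2 * ((r : ℂ) ^ 2) ^ m)) := by
  have hterm : ∀ k ∈ Hr r, Tendsto (fun β => ((br r (r * β) / br r (β + k)) ^ 2) ^ m) (𝓝[≠] 1)
      (𝓝 (if br r (1 + k) = 0 then ((r : ℂ) ^ 2) ^ m else 0)) := by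
    intro k _
    split_ifs with hk
    · exact (tendsto_br_ratio_sq_of_br_eq_zero hr hk).pow m
    · simpa [hm] using
        (((tendsto_br_ratio_of_br_ne_zero r hk).pow 2).pow m).mono_left nhdsWithin_le_nhds
  convert tendsto_finsetSum _ hterm using 2
  rw [← sum_filter, filter_Hr_br_one_add_eq_zero hr heven, sum_pair (by omega), two_mul]

/-- for even `r ≥ 2` and `g ≥ 2`, the Verlinde expression
`((r/2)^g/r) · Σ_{k ∈ H_r} (⦃rβ⦄/⦃β+k⦄)^{2g−2}` tends to `r^{3g−3}/2^{g−1}` as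
`β → 1`, `β ≠ 1`. -/
theorem statement4 (r g : ℕ) (hr : 2 ≤ r) (heven : Even r) (hg : 2 ≤ g) :
    Filter.Tendsto
      (fun β : ℂ => (((r : ℂ) / 2) ^ g / (r : ℂ)) *
        ∑ k ∈ Hr r, (br r ((r : ℂ) * β) / br r (β + (k : ℂ))) ^ (2 * g - 2))
      (nhdsWithin 1 {(1 : ℂ)}ᶜ) (nhds ((r : ℂ) ^ (3 * g - 3) / 2 ^ (g - 1))) := by
  have hlim := (tendsto_sum_Hr_br_ratio_sq_pow (by omega) heven (m := g - 1) (by omega)).const_mul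
    (((r : ℂ) / 2) ^ g / r)
  simp_rw [show 2 * g - 2 = 2 * (g - 1) by omega, pow_mul]
  convert hlim using 2
  obtain ⟨m, rfl⟩ : ∃ m, g = m + 1 := ⟨g - 1, by omega⟩
  have hr0 : (r : ℂ) ≠ 0 := Nat.cast_ne_zero.2 (by omega)
  rw [show 3 * (m + 1) - 3 = 3 * m by omega, Nat.add_sub_cancel, div_pow, ← pow_mul]
  field_simp
  ring
end

section
/- Let r ≥ 2 be an even integer and let β ∈ ℂ be such that ⦃β+k⦄ ≠ 0 for every k ∈ H_r. Then ((r/2)²/r) · Σ_{k ∈ H_r} (⦃rβ⦄/⦃β+k⦄)² = (r/2)³ · (2 − q^{rβ} − q^{−rβ}). (This is the genus-2 graded Verlinde formula of the paper: dim_t 𝕍(Σ₂) = (r')³(−t^{−1} + 2 − t) with t = q^{−2r'β} = q^{−rβ}, showing that for r even the degree ±1 parts of 𝕍(Σ₂) have dimension (r')³.) -/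
open Polynomial Finset

namespace Polynomial

variable {ι K : Type*} [Field K] {s : Finset ι} {f : ι → K} {x c : K} {n : ℕ}

theorem eval_prod_erase_X_sub_C [DecidableEq ι] {i : ι} (hi : i ∈ s) (hxi : x ≠ f i) :
    eval x (∏ j ∈ s.erase i, (X - C (f j))) = eval x (∏ j ∈ s, (X - C (f j))) * (x - f i)⁻¹ := by
  rw [eq_mul_inv_iff_mul_eq₀ (sub_ne_zero.2 hxi), ← prod_erase_mul s _ hi, eval_mul]
  simp

theorem eval_derivative_prod_X_sub_C (hx : ∀ i ∈ s, x ≠ f i) :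
    eval x (derivative (∏ i ∈ s, (X - C (f i)))) =
      eval x (∏ i ∈ s, (X - C (f i))) * ∑ i ∈ s, (x - f i)⁻¹ := by
  classical
  rw [derivative_prod_finset, eval_finsetSum, mul_sum]
  refine sum_congr rfl fun i hi => ?_
  rw [derivative_X_sub_C, mul_one, eval_prod_erase_X_sub_C hi (hx i hi)]

theorem eval_derivative_derivative_prod_X_sub_C (hx : ∀ i ∈ s, x ≠ f i) :
    eval x (derivative (derivative (∏ i ∈ s, (X - C (f i))))) =
      eval x (∏ i ∈ s, (X - C (f i))) *
        ((∑ i ∈ s, (x - f i)⁻¹) ^ 2 - ∑ i ∈ s, (x - f i)⁻¹ ^ 2) := by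
  classical
  rw [derivative_prod_finset]
  simp only [derivative_X_sub_C, mul_one]
  rw [derivative_sum, eval_finsetSum]
  calc ∑ i ∈ s, eval x (derivative (∏ j ∈ s.erase i, (X - C (f j))))
      = ∑ i ∈ s, eval x (∏ j ∈ s, (X - C (f j))) * (x - f i)⁻¹ *
          ∑ j ∈ s.erase i, (x - f j)⁻¹ := by
        refine sum_congr rfl fun i hi => ?_
        rw [eval_derivative_prod_X_sub_C fun j hj => hx j (mem_of_mem_erase hj),
          eval_prod_erase_X_sub_C hi (hx i hi)]
    _ = eval x (∏ j ∈ s, (X - C (f j))) *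
          ∑ i ∈ s, (x - f i)⁻¹ * (∑ j ∈ s, (x - f j)⁻¹ - (x - f i)⁻¹) := by
        rw [mul_sum]
        refine sum_congr rfl fun i hi => ?_
        rw [sum_erase_eq_sub hi, mul_assoc]
    _ = _ := by
        simp only [mul_sub, sum_sub_distrib, ← sum_mul, sq]

theorem eval_X_pow_add_C_of_sq_eq_one (hn : Even n) (hx : x ^ 2 = 1) :
    eval x (X ^ n + C c) = 1 + c ∧ eval x (derivative (X ^ n + C c)) = n * x ∧
      eval x (derivative (derivative (X ^ n + C c))) = n * (n - 1) := by
  obtain rfl | ⟨k, rfl⟩ : n = 0 ∨ ∃ k, n = 2 * k + 2 := by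
    obtain ⟨m, rfl⟩ := hn
    rcases m with _ | m
    exacts [.inl rfl, .inr ⟨m, by omega⟩]
  · simp
  have hx2k : x ^ (2 * k) = 1 := by rw [pow_mul, hx, one_pow]
  simp only [derivative_add, derivative_C, add_zero, derivative_X_pow, derivative_C_mul_X_pow,
    show 2 * k + 2 - 1 = 2 * k + 1 by omega, show 2 * k + 1 - 1 = 2 * k by omega]
  simp only [eval_add, eval_mul, eval_C, eval_pow, eval_X, pow_add, pow_one, hx2k, hx]
  push_cast
  refine ⟨?_, ?_, ?_⟩ <;> ring

theorem eval_prod_X_sub_C_ne_zero (hx : ∀ i ∈ s, x ≠ f i) :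
    eval x (∏ i ∈ s, (X - C (f i))) ≠ 0 := by
  rw [eval_prod, prod_ne_zero_iff]
  simpa [sub_ne_zero] using hx

end Polynomial

section

variable {ι K : Type*} [Field K] {s : Finset ι} {f : ι → K} {x c : K} {n : ℕ}

theorem ne_zero_of_sub_inv_ne_zero {a : K} (ha : a - a⁻¹ ≠ 0) : a ≠ 0 := by
  rintro rfl; simp at ha

theorem ne_one_of_sub_inv_ne_zero {a : K} (ha : a - a⁻¹ ≠ 0) : a ≠ 1 := by
  rintro rfl; simp at ha

theorem ne_neg_one_of_sub_inv_ne_zero {a : K} (ha : a - a⁻¹ ≠ 0) : a ≠ -1 := by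
  rintro rfl; simp at ha

theorem four_mul_inv_sq_sub_inv_self {a : K} (ha : a - a⁻¹ ≠ 0) :
    4 * ((a - a⁻¹) ^ 2)⁻¹ = (1 - a)⁻¹ ^ 2 + (-1 - a)⁻¹ ^ 2 - (1 - a)⁻¹ + (-1 - a)⁻¹ := by
  have h0 := ne_zero_of_sub_inv_ne_zero ha
  have h1 : 1 - a ≠ 0 := sub_ne_zero.2 (ne_one_of_sub_inv_ne_zero ha).symm
  have h2 : -1 - a ≠ 0 := sub_ne_zero.2 (ne_neg_one_of_sub_inv_ne_zero ha).symm
  rw [show a - a⁻¹ = (1 - a) * (-1 - a) / a by field_simp; ring]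
  field_simp
  ring

theorem one_add_ne_zero_of_prod_eq_X_pow_add_C (hP : ∏ i ∈ s, (X - C (f i)) = X ^ n + C c)
    (hf : ∀ i ∈ s, f i ≠ 1) : 1 + c ≠ 0 := by
  simpa [hP] using eval_prod_X_sub_C_ne_zero (x := 1) fun i hi => (hf i hi).symm

theorem sum_inv_sub_of_prod_eq_X_pow_add_C (hn : Even n)
    (hP : ∏ i ∈ s, (X - C (f i)) = X ^ n + C c) (hx : x ^ 2 = 1) (hxf : ∀ i ∈ s, x ≠ f i) :
    ∑ i ∈ s, (x - f i)⁻¹ = n * x / (1 + c) ∧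
      ∑ i ∈ s, (x - f i)⁻¹ ^ 2 = (n * x / (1 + c)) ^ 2 - n * (n - 1) / (1 + c) := by
  obtain ⟨hP₀, hP₁, hP₂⟩ := eval_X_pow_add_C_of_sq_eq_one (c := c) hn hx
  have h₁ := eval_derivative_prod_X_sub_C hxf
  have h₂ := eval_derivative_derivative_prod_X_sub_C hxf
  rw [hP, hP₀] at h₁ h₂
  rw [hP₁] at h₁
  rw [hP₂] at h₂
  have hc : 1 + c ≠ 0 := hP₀ ▸ hP ▸ eval_prod_X_sub_C_ne_zero hxf
  have hS₁ : ∑ i ∈ s, (x - f i)⁻¹ = n * x / (1 + c) := by rw [h₁, mul_div_cancel_left₀ _ hc]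
  refine ⟨hS₁, ?_⟩
  rw [← hS₁, h₂, mul_div_cancel_left₀ _ hc]
  ring

theorem four_mul_sum_inv_sq_sub_inv_of_prod_eq_X_pow_add_C (hn : Even n)
    (hP : ∏ i ∈ s, (X - C (f i)) = X ^ n + C c) (hf : ∀ i ∈ s, f i - (f i)⁻¹ ≠ 0) :
    4 * ∑ i ∈ s, ((f i - (f i)⁻¹) ^ 2)⁻¹ = -(2 * n ^ 2 * c) / (1 + c) ^ 2 := by
  obtain ⟨hS₁, hS₂⟩ := sum_inv_sub_of_prod_eq_X_pow_add_C hn hP (one_pow 2)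
    fun i hi => (ne_one_of_sub_inv_ne_zero (hf i hi)).symm
  obtain ⟨hT₁, hT₂⟩ := sum_inv_sub_of_prod_eq_X_pow_add_C hn hP neg_one_sq
    fun i hi => (ne_neg_one_of_sub_inv_ne_zero (hf i hi)).symm
  rw [mul_sum, sum_congr rfl fun i hi => four_mul_inv_sq_sub_inv_self (hf i hi), sum_add_distrib,
    sum_sub_distrib, sum_add_distrib, hS₁, hS₂, hT₁, hT₂]
  have hc := one_add_ne_zero_of_prod_eq_X_pow_add_C hP fun i hi =>
    ne_one_of_sub_inv_ne_zero (hf i hi)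
  field_simp
  ring

end

open Complex
open scoped Real

section

variable {r : ℕ}

theorem qc_add (x y : ℂ) : qc r (x + y) = qc r x * qc r y := by
  rw [qc, qc, qc, ← exp_add]; ring_nf

theorem qc_neg (x : ℂ) : qc r (-x) = (qc r x)⁻¹ := by
  rw [qc, qc, ← exp_neg]; ring_nf

theorem br_eq (x : ℂ) : br r x = qc r x - (qc r x)⁻¹ := by
  rw [br, qc_neg]

theorem qc_natCast_mul (hr : r ≠ 0) (x : ℂ) : qc r (r * x) = exp (π * I * x) := by
  rw [qc]; field_simp

theorem qc_pow (x : ℂ) : qc r x ^ r = qc r (r * x) := by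
  rw [qc, qc, ← exp_nat_mul]; ring_nf

theorem qc_two_mul_natCast (j : ℕ) : qc r (2 * j) = exp (2 * π * I / r) ^ j := by
  rw [qc, ← exp_nat_mul]; ring_nf

theorem prod_X_sub_C_qc_eq (hr : r ≠ 0) (heven : Even r) (β : ℂ) :
    ∏ k ∈ Hr r, (X - C (qc r (β + k))) = X ^ r + C (qc r (r * β)) := by
  have hα : qc r (β + (1 - r)) ^ r = -qc r (r * β) := by
    have hodd : Odd (1 - r : ℤ) := odd_one.sub_even (by exact_mod_cast heven)
    rw [qc_pow, qc_natCast_mul hr, qc_natCast_mul hr, mul_add, exp_add,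
      show (1 - r : ℂ) = ((1 - r : ℤ) : ℂ) by push_cast; ring, mul_comm _ ((1 - r : ℤ) : ℂ),
      exp_int_mul, exp_pi_mul_I, hodd.neg_one_zpow, mul_neg_one]
  rw [Hr, prod_image fun i _ j _ hij => by simpa using hij, ← sub_neg_eq_add, ← C_neg,
    X_pow_sub_C_eq_prod (isPrimitiveRoot_exp r hr) (Nat.pos_of_ne_zero hr) hα]
  refine prod_congr rfl fun j _ => ?_
  rw [show β + ((2 * j - (r - 1) : ℤ) : ℂ) = β + (1 - r) + 2 * j by push_cast; ring, qc_add,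
    qc_two_mul_natCast, mul_comm]

end

/-- for even `r ≥ 2` and `β` with `⦃β+k⦄ ≠ 0` for all `k ∈ H_r`,
`((r/2)²/r) · Σ_{k ∈ H_r} (⦃rβ⦄/⦃β+k⦄)² = (r/2)³ · (2 − q^{rβ} − q^{−rβ})`. -/
theorem statement5 (r : ℕ) (hr : 2 ≤ r) (heven : Even r) (β : ℂ)
    (h : ∀ k ∈ Hr r, br r (β + (k : ℂ)) ≠ 0) :
    (((r : ℂ) / 2) ^ 2 / (r : ℂ)) *
        ∑ k ∈ Hr r, (br r ((r : ℂ) * β) / br r (β + (k : ℂ))) ^ 2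
      = ((r : ℂ) / 2) ^ 3 * (2 - qc r ((r : ℂ) * β) - qc r (-((r : ℂ) * β))) := by
  have hr0 : r ≠ 0 := by omega
  have hP := prod_X_sub_C_qc_eq hr0 heven β
  have ha : ∀ k ∈ Hr r, qc r (β + k) - (qc r (β + k))⁻¹ ≠ 0 := fun k hk =>
    br_eq (r := r) _ ▸ h k hk
  have hsum := four_mul_sum_inv_sq_sub_inv_of_prod_eq_X_pow_add_C heven hP ha
  have hc := one_add_ne_zero_of_prod_eq_X_pow_add_C hP fun k hk =>
    ne_one_of_sub_inv_ne_zero (ha k hk)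
  simp only [br_eq, div_pow, div_eq_mul_inv _ (_ ^ 2), ← mul_sum, qc_neg]
  have hr' : (r : ℂ) ≠ 0 := Nat.cast_ne_zero.2 hr0
  have ht : qc r (r * β) ≠ 0 := exp_ne_zero _
  rw [eq_div_of_mul_eq (by norm_num) ((mul_comm _ _).trans hsum)]
  field_simp
  ring
end
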